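/- Any two binary matrices in {0,1}^{n×m} with identical row sums and identical column sums can be transformed into one another by a finite sequence of plaquette (2×2 swap) moves. -/
import Mathlib

open Finset

/-- Row sum of a binary matrix. -/
def rowSum {n m : ℕ} (x : Fin n → Fin m → Bool) (i : Fin n) : ℕ :=
  ∑ c, if x i c then 1 else 0

/-- Column sum of a binary matrix. -/
def colSum {n m : ℕ} (x : Fin n → Fin m → Bool) (c : Fin m) : ℕ :=
  ∑ i, if x i c then 1 else 0

/-- One plaquette (2×2 swap) move: on rows `i ≠ j` and columns `c ≠ c'` where
the 2×2 submatrix equals `[[1,0],[0,1]]` or `[[0,1],[1,0]]`, flip it to the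
other pattern, fixing all other entries. -/
def PlaquetteMove {n m : ℕ} (x y : Fin n → Fin m → Bool) : Prop :=
  ∃ (i j : Fin n) (c c' : Fin m), i ≠ j ∧ c ≠ c' ∧
    x i c ≠ x i c' ∧ x j c' = x i c ∧ x j c = x i c' ∧
    y = fun r d =>
      if (r = i ∨ r = j) ∧ (d = c ∨ d = c') then !(x r d) else x r d

/-! ### Auxiliary machinery -/

/-- Set of disagreement cells. -/
def Dset {n m : ℕ} (X Y : Fin n → Fin m → Bool) : Finset (Fin n × Fin m) :=
  Finset.univ.filter (fun p => X p.1 p.2 ≠ Y p.1 p.2)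

@[simp] lemma mem_Dset {n m : ℕ} {X Y : Fin n → Fin m → Bool} {p : Fin n × Fin m} :
    p ∈ Dset X Y ↔ X p.1 p.2 ≠ Y p.1 p.2 := by
  simp [Dset]

lemma Dset_comm {n m : ℕ} (X Y : Fin n → Fin m → Bool) : Dset X Y = Dset Y X := by
  ext p; simp [ne_comm]

/-- Balance lemma: equal boolean sums and a (1,0) position give a (0,1) position. -/
lemma exists_flip {k : ℕ} {f g : Fin k → Bool}
    (hsum : (∑ d, if f d then 1 else 0 : ℕ) = ∑ d, if g d then 1 else 0)
    {a : Fin k} (hf : f a = true) (hg : g a = false) :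
    ∃ b, f b = false ∧ g b = true := by
  by_contra hcon
  push_neg at hcon
  have hlt : (∑ d, if g d then (1:ℕ) else 0) < ∑ d, if f d then 1 else 0 := by
    apply Finset.sum_lt_sum
    · intro b _
      cases hfb : f b
      · have hgb := hcon b hfb
        cases hgb' : g b
        · simp
        · exact absurd hgb' hgb
      · cases g b <;> simp
    · exact ⟨a, Finset.mem_univ a, by simp [hf, hg]⟩
  rw [hsum] at hlt
  exact lt_irrefl _ hlt

/-- Flipping two cells of opposite values preserves the boolean sum. -/
lemma sum_boolFlip {m : ℕ} (f g : Fin m → Bool) (c c' : Fin m) (hcc : c ≠ c')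
    (h : ∀ d, d ≠ c → d ≠ c' → g d = f d) (hc : g c = (!f c)) (hc' : g c' = (!f c'))
    (hne : f c ≠ f c') :
    (∑ d, if g d then 1 else 0 : ℕ) = ∑ d, if f d then 1 else 0 := by
  have hsub : ({c, c'} : Finset (Fin m)) ⊆ univ := Finset.subset_univ _
  rw [← Finset.sum_sdiff hsub, ← Finset.sum_sdiff (f := fun d => if f d then 1 else 0) hsub]
  congr 1
  · apply Finset.sum_congr rfl
    intro d hd
    simp only [Finset.mem_sdiff, Finset.mem_insert, Finset.mem_singleton, not_or] at hd
    rw [h d hd.2.1 hd.2.2]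
  · rw [Finset.sum_pair hcc, Finset.sum_pair hcc, hc, hc']
    cases hfc : f c <;> cases hfc' : f c' <;> simp_all

lemma move_rowSum {n m : ℕ} {x y : Fin n → Fin m → Bool} (h : PlaquetteMove x y) :
    ∀ r, rowSum y r = rowSum x r := by
  obtain ⟨i, j, c, c', hij, hcc, h1, h2, h3, hy⟩ := h
  intro r
  subst hy
  by_cases hri : r = i
  · subst hri
    apply sum_boolFlip (x r) _ c c' hcc
    · intro d hd1 hd2; simp [hd1, hd2]
    · simp
    · simp
    · exact h1
  · by_cases hrj : r = j
    · subst hrj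
      apply sum_boolFlip (x r) _ c c' hcc
      · intro d hd1 hd2; simp [hd1, hd2]
      · simp
      · simp
      · rw [h2, h3]; exact fun he => h1 he.symm
    · unfold rowSum
      apply Finset.sum_congr rfl
      intro d _
      simp [hri, hrj]

lemma move_colSum {n m : ℕ} {x y : Fin n → Fin m → Bool} (h : PlaquetteMove x y) :
    ∀ d, colSum y d = colSum x d := by
  obtain ⟨i, j, c, c', hij, hcc, h1, h2, h3, hy⟩ := h
  intro d
  subst hy
  by_cases hdc : d = c
  · subst hdc
    apply sum_boolFlip (fun r => x r d) _ i j hij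
    · intro r hr1 hr2; simp [hr1, hr2]
    · simp
    · simp
    · rw [h3]; exact h1
  · by_cases hdc' : d = c'
    · subst hdc'
      apply sum_boolFlip (fun r => x r d) _ i j hij
      · intro r hr1 hr2; simp [hr1, hr2]
      · simp [hdc]
      · simp [hdc]
      · rw [h2]; exact fun he => h1 he.symm
    · unfold colSum
      apply Finset.sum_congr rfl
      intro r _
      simp [hdc, hdc']

lemma move_symm {n m : ℕ} {x y : Fin n → Fin m → Bool} (h : PlaquetteMove x y) :
    PlaquetteMove y x := by
  obtain ⟨i, j, c, c', hij, hcc, h1, h2, h3, hy⟩ := h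
  subst hy
  refine ⟨i, j, c, c', hij, hcc, ?_, ?_, ?_, ?_⟩
  · simp only [true_or, or_true, and_self, if_pos, true_and]
    intro he
    exact h1 (Bool.not_inj he)
  · simp [h2]
  · simp [h3]
  · funext r d
    by_cases hcond : (r = i ∨ r = j) ∧ (d = c ∨ d = c')
    · simp [hcond]
    · simp [hcond]

/-- The key cardinality decrease: if `Z` agrees with `X` off the plaquette,
and fixes three disagreements, the disagreement set shrinks. -/
lemma Dset_card_lt {n m : ℕ} (X Y Z : Fin n → Fin m → Bool) (i j : Fin n) (c c' : Fin m)
    (hij : i ≠ j) (hcc : c ≠ c')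
    (hZ : ∀ r d, ¬((r = i ∨ r = j) ∧ (d = c ∨ d = c')) → Z r d = X r d)
    (h1 : Z i c = Y i c) (h2 : Z i c' = Y i c') (h3 : Z j c' = Y j c')
    (d1 : X i c ≠ Y i c) (d2 : X i c' ≠ Y i c') :
    (Dset Z Y).card < (Dset X Y).card := by
  have hpairD : ({((i,c) : Fin n × Fin m), (i,c')} : Finset _) ⊆ Dset X Y := by
    intro p hp
    simp only [Finset.mem_insert, Finset.mem_singleton] at hp
    rcases hp with rfl | rfl
    · exact mem_Dset.mpr d1
    · exact mem_Dset.mpr d2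
  have hpair : ({((i,c) : Fin n × Fin m), (i,c')} : Finset _) ⊆ insert (j,c) (Dset X Y) :=
    hpairD.trans (Finset.subset_insert _ _)
  have hsub : Dset Z Y ⊆ (insert ((j,c) : Fin n × Fin m) (Dset X Y)) \ {(i,c),(i,c')} := by
    intro p hp
    obtain ⟨r, d⟩ := p
    have hp' : Z r d ≠ Y r d := mem_Dset.mp hp
    by_cases hcond : (r = i ∨ r = j) ∧ (d = c ∨ d = c')
    · obtain ⟨hr | hr, hd | hd⟩ := hcond <;> subst hr <;> subst hd
      · exact absurd h1 hp'
      · exact absurd h2 hp'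
      · refine Finset.mem_sdiff.mpr ⟨Finset.mem_insert_self _ _, ?_⟩
        intro hmem
        rcases Finset.mem_insert.mp hmem with h | h
        · exact hij (congrArg Prod.fst h).symm
        · exact hij (congrArg Prod.fst (Finset.mem_singleton.mp h)).symm
      · exact absurd h3 hp'
    · have hx : X r d ≠ Y r d := by rw [← hZ r d hcond]; exact hp'
      simp only [Finset.mem_sdiff, Finset.mem_insert, Finset.mem_singleton,
        Prod.mk.injEq, not_or, mem_Dset]
      refine ⟨Or.inr hx, ?_, ?_⟩
      · rintro ⟨rfl, rfl⟩; exact hcond ⟨Or.inl rfl, Or.inl rfl⟩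
      · rintro ⟨rfl, rfl⟩; exact hcond ⟨Or.inl rfl, Or.inr rfl⟩
  have hc1 : (Dset Z Y).card ≤ (insert ((j,c) : Fin n × Fin m) (Dset X Y)).card - 2 := by
    have hcard := Finset.card_le_card hsub
    rwa [Finset.card_sdiff_of_subset hpair, Finset.card_pair (by simp [hcc])] at hcard
  have hc2 : (insert ((j,c) : Fin n × Fin m) (Dset X Y)).card ≤ (Dset X Y).card + 1 :=
    Finset.card_insert_le _ _
  have hc3 : 2 ≤ (Dset X Y).card := by
    have := Finset.card_le_card hpairD
    rwa [Finset.card_pair (by simp [hcc])] at this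
  omega

/-- The descent lemma: given a `+` cell in some column, there is a plaquette
move (on `X` or on `Y`) strictly reducing the number of disagreements. -/
lemma descent {n m : ℕ} (X Y : Fin n → Fin m → Bool)
    (hrow : ∀ i, rowSum X i = rowSum Y i)
    (hcol : ∀ c, colSum X c = colSum Y c) :
    ∀ k (c : Fin m),
      (Finset.univ.filter (fun r => X r c = true ∧ Y r c = false)).card ≤ k →
      (∃ i, X i c = true ∧ Y i c = false) →
      (∃ X', PlaquetteMove X X' ∧ (Dset X' Y).card < (Dset X Y).card) ∨
      (∃ Y', PlaquetteMove Y Y' ∧ (Dset X Y').card < (Dset X Y).card) := by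
  intro k
  induction k with
  | zero =>
    intro c hcard ⟨i, hi⟩
    exfalso
    have : i ∈ Finset.univ.filter (fun r => X r c = true ∧ Y r c = false) := by
      simp [hi.1, hi.2]
    have := Finset.card_pos.mpr ⟨i, this⟩
    omega
  | succ k ih =>
    intro c hcard ⟨i, hi1, hi2⟩
    -- row balance: find a minus in row i
    obtain ⟨c', hc'1, hc'2⟩ : ∃ c', X i c' = false ∧ Y i c' = true :=
      exists_flip (f := X i) (g := Y i) (hrow i) hi1 hi2
    have hcc : c ≠ c' := by rintro rfl; rw [hi1] at hc'1; exact Bool.noConfusion hc'1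
    -- column balance: find a plus in column c'
    obtain ⟨j, hj1, hj2⟩ : ∃ j, Y j c' = false ∧ X j c' = true :=
      exists_flip (f := fun r => Y r c') (g := fun r => X r c') (hcol c').symm hc'2 hc'1
    by_cases hgood : ∃ r, (X r c' = true ∧ Y r c' = false) ∧ (X r c = false ∨ Y r c = true)
    · obtain ⟨r, ⟨hr1, hr2⟩, hr3⟩ := hgood
      have hir : i ≠ r := by rintro rfl; rw [hr1] at hc'1; exact Bool.noConfusion hc'1
      by_cases hXrc : X r c = false
      · -- plaquette move on X
        left
        refine ⟨_, ⟨i, r, c, c', hir, hcc, ?_, ?_, ?_, rfl⟩, ?_⟩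
        · rw [hi1, hc'1]; simp
        · rw [hr1, hi1]
        · rw [hXrc, hc'1]
        · apply Dset_card_lt X Y _ i r c c' hir hcc
          · intro a b hcond; simp [hcond]
          · simp [hi1, hi2]
          · simp [hc'1, hc'2]
          · simp [hir, hr1, hr2]
          · rw [hi1, hi2]; simp
          · rw [hc'1, hc'2]; simp
      · have hXrc' : X r c = true := by cases h : X r c; exact absurd h hXrc; rfl
        have hYrc : Y r c = true := by
          rcases hr3 with h | h
          · exact absurd h hXrc
          · exact h
        -- plaquette move on Y
        right
        refine ⟨_, ⟨i, r, c, c', hir, hcc, ?_, ?_, ?_, rfl⟩, ?_⟩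
        · rw [hi2, hc'2]; simp
        · rw [hr2, hi2]
        · rw [hYrc, hc'2]
        · rw [Dset_comm X Y, Dset_comm X]
          apply Dset_card_lt Y X _ i r c c' hir hcc
          · intro a b hcond; simp [hcond]
          · simp [hi1, hi2]
          · simp [hc'1, hc'2]
          · simp [hir, hr1, hr2]
          · rw [hi1, hi2]; simp
          · rw [hc'1, hc'2]; simp
    · -- bad case: every plus in column c' is a plus in column c; recurse
      push_neg at hgood
      apply ih c'
      · have hss : (Finset.univ.filter (fun r => X r c' = true ∧ Y r c' = false)) ⊂
            (Finset.univ.filter (fun r => X r c = true ∧ Y r c = false)) := by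
          constructor
          · intro r hr
            simp only [Finset.mem_filter, Finset.mem_univ, true_and] at hr ⊢
            have := hgood r hr
            constructor
            · cases h : X r c
              · exact absurd h this.1
              · rfl
            · cases h : Y r c
              · rfl
              · exact absurd h this.2
          · intro hsub
            have : i ∈ Finset.univ.filter (fun r => X r c' = true ∧ Y r c' = false) := by
              apply hsub; simp [hi1, hi2]
            simp only [Finset.mem_filter, Finset.mem_univ, true_and] at this
            rw [hc'1] at this
            exact Bool.noConfusion this.1
        have := Finset.card_lt_card hss
        omega
      · exact ⟨j, hj2, hj1⟩

/-- Any two binary matrices in `{0,1}^{n×m}` with identical row sums and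
identical column sums can be transformed into one another by a finite sequence
of plaquette (2×2 swap) moves. -/
theorem plaquette_connectivity {n m : ℕ} (X Y : Fin n → Fin m → Bool)
    (hrow : ∀ i, rowSum X i = rowSum Y i)
    (hcol : ∀ c, colSum X c = colSum Y c) :
    Relation.ReflTransGen PlaquetteMove X Y := by
  suffices h : ∀ N (X Y : Fin n → Fin m → Bool), (Dset X Y).card ≤ N →
      (∀ i, rowSum X i = rowSum Y i) → (∀ c, colSum X c = colSum Y c) →
      Relation.ReflTransGen PlaquetteMove X Y by
    exact h _ X Y le_rfl hrow hcol
  intro N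
  induction N with
  | zero =>
    intro X Y hcard _ _
    have hD : Dset X Y = ∅ := Finset.card_eq_zero.mp (Nat.le_zero.mp hcard)
    have : X = Y := by
      funext r d
      by_contra hne
      have : (r, d) ∈ Dset X Y := mem_Dset.mpr hne
      rw [hD] at this
      exact absurd this (Finset.notMem_empty _)
    exact this ▸ Relation.ReflTransGen.refl
  | succ N ih =>
    intro X Y hcard hrow hcol
    by_cases hXY : X = Y
    · exact hXY ▸ Relation.ReflTransGen.refl
    · have hex : ∃ i c, X i c ≠ Y i c := by
        by_contra h
        push_neg at h
        exact hXY (funext fun i => funext fun c => h i c)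
      obtain ⟨i, c, hic⟩ := hex
      have hplus : ∃ r, X r c = true ∧ Y r c = false := by
        cases hXic : X i c
        · cases hYic : Y i c
          · rw [hXic, hYic] at hic; exact absurd rfl hic
          · obtain ⟨j, h1, h2⟩ : ∃ j, Y j c = false ∧ X j c = true :=
              exists_flip (f := fun r => Y r c) (g := fun r => X r c) (hcol c).symm hYic hXic
            exact ⟨j, h2, h1⟩
        · cases hYic : Y i c
          · exact ⟨i, hXic, hYic⟩
          · rw [hXic, hYic] at hic; exact absurd rfl hic
      rcases descent X Y hrow hcol _ c le_rfl hplus with ⟨X', hm, hlt⟩ | ⟨Y', hm, hlt⟩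
      · refine Relation.ReflTransGen.head hm (ih X' Y (by omega) ?_ ?_)
        · intro r; rw [move_rowSum hm r]; exact hrow r
        · intro d; rw [move_colSum hm d]; exact hcol d
      · refine Relation.ReflTransGen.tail (ih X Y' (by omega) ?_ ?_) (move_symm hm)
        · intro r; rw [hrow r, ← move_rowSum hm r]
        · intro d; rw [hcol d, ← move_colSum hm d]
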